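/- If n ≥ 1, d > 0 is real, and X, Y ∈ ℂⁿ satisfy φ_n(X,Y) = d², then there exists an affine map I : ℂⁿ → ℂⁿ with orthogonal linear part such that I((0,0,...,0)) = X and I((d,0,...,0)) = Y. -/

import Mathlib

/-!
Take `I x = f x + X` with `f` linear. Since `φ_n(P, Q)` is the quadratic form of `P - Q` for the
dot product, `I` has orthogonal linear part iff `f` is orthogonal for the dot product, and we need
`f e₀ = (Y - X) / d`, both vectors having square norm `1`. Any two vectors `u, v` of the same
nonzero square norm are exchanged by an orthogonal map: by the reflection in `u - v`, or, when
`u - v` is isotropic, by minus the reflection in `u + v`.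
-/

/-- φ_n(X,Y) = Σ_{i=1}^n (x_i − y_i)². -/
noncomputable def phi (n : ℕ) (X Y : Fin n → ℂ) : ℂ := ∑ i, (X i - Y i) ^ 2

open Module Matrix

namespace LinearMap.BilinForm

variable {K M : Type*} [Field K] [AddCommGroup M] [Module K M] {B : LinearMap.BilinForm K M}

lemma IsSymm.exists_isOrthogonal_apply_eq_of_sub (hB : B.IsSymm) {u v : M}
    (huv : B u u = B v v) (hw : B (u - v) (u - v) ≠ 0) :
    ∃ f : M ≃ₗ[K] M, B.IsOrthogonal f ∧ f u = v := by
  have hr : IsReflective B (u - v) := ⟨.of_ne_zero hw, fun _ => (Ne.isUnit hw).dvd⟩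
  refine ⟨reflection (hr.coroot_apply_self B),
    hr.isOrthogonal_reflection B (isSymm_iff.mp hB), ?_⟩
  -- `u - v` is orthogonal to `u + v`, so the reflection swaps `u = (u+v)/2 + (u-v)/2` and `v`.
  have hcoroot : hr.coroot B u = 1 := hr.regular.left <| by
    dsimp only
    rw [hr.apply_self_mul_coroot_apply]
    simp only [map_sub, LinearMap.sub_apply]
    linear_combination huv - hB.eq v u
  rw [reflection_apply, hcoroot, one_smul, sub_sub_cancel]

variable [NeZero (2 : K)]

lemma IsSymm.exists_isOrthogonal_apply_eq (hB : B.IsSymm) {u v : M}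
    (hu : B u u ≠ 0) (huv : B u u = B v v) :
    ∃ f : M ≃ₗ[K] M, B.IsOrthogonal f ∧ f u = v := by
  by_cases hw : B (u - v) (u - v) = 0
  -- `B (u + v) (u + v) + B (u - v) (u - v) = 4 * B u u`
  · have hw' : B (u - -v) (u - -v) ≠ 0 := by
      intro h
      apply hu
      simp only [map_sub, map_neg, LinearMap.sub_apply, LinearMap.neg_apply] at hw h
      have : (2 : K) * 2 * B u u = 0 := by linear_combination h + hw + 2 * huv
      simpa [two_ne_zero] using this
    obtain ⟨f, hf, hfu⟩ := hB.exists_isOrthogonal_apply_eq_of_sub (by simpa using huv) hw'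
    refine ⟨f.trans (LinearEquiv.neg K), fun x y => ?_, ?_⟩
    · simpa using hf x y
    · simp [hfu]
  · exact hB.exists_isOrthogonal_apply_eq_of_sub huv hw

end LinearMap.BilinForm

lemma Matrix.isSymm_dotProductBilin {K ι : Type*} [CommSemiring K] [Fintype ι] :
    LinearMap.BilinForm.IsSymm (dotProductBilin K K : LinearMap.BilinForm K (ι → K)) :=
  ⟨fun x y => dotProduct_comm x y⟩

lemma phi_eq_dotProduct {n : ℕ} (X Y : Fin n → ℂ) : phi n X Y = (X - Y) ⬝ᵥ (X - Y) := by
  simp [phi, dotProduct, sq]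

lemma phi_add_right_of_isOrthogonal {n : ℕ} {f : (Fin n → ℂ) →ₗ[ℂ] Fin n → ℂ}
    (hf : (dotProductBilin ℂ ℂ).IsOrthogonal f) (X P Q : Fin n → ℂ) :
    phi n (f P + X) (f Q + X) = phi n P Q := by
  rw [phi_eq_dotProduct, phi_eq_dotProduct, add_sub_add_right_eq_sub, ← map_sub]
  exact hf _ _

/-- If n ≥ 1, d > 0 and X, Y ∈ ℂⁿ satisfy φ_n(X,Y) = d², then there is an
affine map I : ℂⁿ → ℂⁿ with orthogonal linear part with I((0,...,0)) = X and
I((d,0,...,0)) = Y. -/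
theorem stmt_14 (n : ℕ) (hn : 1 ≤ n) (d : ℝ) (hd : 0 < d)
    (X Y : Fin n → ℂ) (hXY : phi n X Y = (d : ℂ) ^ 2) :
    ∃ I : (Fin n → ℂ) →ᵃ[ℂ] (Fin n → ℂ),
      (∀ P Q : Fin n → ℂ, phi n (I P) (I Q) = phi n P Q) ∧
      I (fun _ => 0) = X ∧
      I (fun i => if (i : ℕ) = 0 then (d : ℂ) else 0) = Y := by
  have hd₀ : (d : ℂ) ≠ 0 := by exact_mod_cast hd.ne'
  let e : Fin n → ℂ := Pi.single ⟨0, hn⟩ 1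
  let v : Fin n → ℂ := (d : ℂ)⁻¹ • (Y - X)
  have he : e ⬝ᵥ e = 1 := by simp [e]
  have hv : v ⬝ᵥ v = 1 := by
    rw [dotProduct_smul, smul_dotProduct, ← neg_sub X Y, neg_dotProduct_neg,
      ← phi_eq_dotProduct, hXY, smul_eq_mul, smul_eq_mul]
    field_simp
  obtain ⟨f, hf, hfe⟩ := isSymm_dotProductBilin.exists_isOrthogonal_apply_eq
    (u := e) (v := v) (by simp [he]) (by simp [he, hv])
  let I : (Fin n → ℂ) →ᵃ[ℂ] Fin n → ℂ :=
    f.toLinearMap.toAffineMap + AffineMap.const ℂ (Fin n → ℂ) X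
  have hI (P : Fin n → ℂ) : I P = f P + X := rfl
  refine ⟨I, fun P Q => ?_, ?_, ?_⟩
  · rw [hI, hI]
    exact phi_add_right_of_isOrthogonal hf X P Q
  · rw [hI, Pi.zero_def.symm, map_zero, zero_add]
  · have hde : (fun i : Fin n => if (i : ℕ) = 0 then (d : ℂ) else 0) = (d : ℂ) • e := by
      ext i
      simp [e, Pi.single_apply, Fin.ext_iff]
    rw [hde, hI, map_smul, hfe, smul_inv_smul₀ hd₀, sub_add_cancel]
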